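/- arXiv:2202.01806 — 2 statements merged into one kernel-verified Lean document; each statement's English description precedes it below -/
import Mathlib

section
/- Write A = A_L̄ · A_{L∩S} where A_L̄ = 1{X_L̄ = v_L̄} and A_{L∩S} = 1{X_{L∩S} = v_{L∩S}}. If Y is independent of X_S (hence of A_{L∩S}, which is a function of X_S) and the Markov chain X_S → X → Y holds, then I(A; Y) ≤ H(A_L̄ | A_{L∩S}). -/
/-!
Let `C = γ(σ x)`, so that `A = 1` forces `C = 1`, and put `w = P(C = 1)`, `a = P(A = 1)`,
`q y = P(Y = y)`, `α y = P(A = 1, Y = y)`. Perfect privacy gives `P(C = 1, Y = y) = w q y`, hence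
the domination `α y ≤ w q y`. Write `I(A;Y)` as the divergence
`∑ y, [α log (α / (a q)) + (q - α) log ((q - α) / ((1 - a) q))]`. By the domination the first
summand is at most `α log (w / a)`; splitting `q - α = (w q - α) + (1 - w) q` and
`(1 - a) q = (w - a) q + (1 - w) q`, the log-sum inequality bounds the second by
`(w q - α) log (w / (w - a))`. Summed over `y` these bounds give `w h(a / w) = H(A | C)`, which is
the `C = 1` part of `H(A_L̄ | A_{L∩S})`.
-/

open Finset

noncomputable def binEnt (p : ℝ) : ℝ := -(p * Real.log p) - (1 - p) * Real.log (1 - p)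

/-- A Kullback–Leibler summand. As `Real.log 0 = 0`, `klTerm t 0 = 0` for every `t`; hence the
side conditions such as `s = 0 → t = 0` below. -/
noncomputable def klTerm (t s : ℝ) : ℝ := t * Real.log (t / s)

@[simp] lemma klTerm_zero_left (s : ℝ) : klTerm 0 s = 0 := by simp [klTerm]

lemma klTerm_self (t : ℝ) : klTerm t t = 0 := by
  rcases eq_or_ne t 0 with rfl | ht
  · simp
  · simp [klTerm, div_self ht]

lemma klTerm_eq_mul_mul_log {t s : ℝ} (hs : s ≠ 0) :
    klTerm t s = s * (t / s * Real.log (t / s)) := by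
  rw [klTerm]; field_simp

lemma klTerm_mul_left {t c s : ℝ} (ht : 0 ≤ t) (htc : t ≤ c) (hts : t ≤ s) :
    klTerm t (c * s) = klTerm t s - t * Real.log c := by
  rcases ht.eq_or_lt with rfl | ht
  · simp
  · have hc : 0 < c := ht.trans_le htc
    have hs : 0 < s := ht.trans_le hts
    rw [klTerm, klTerm, mul_comm c, ← div_div, Real.log_div (by positivity) hc.ne']
    ring

lemma klTerm_mul_le {t c s w : ℝ} (ht : 0 ≤ t) (htc : t ≤ c) (hs : 0 ≤ s) (hts : t ≤ w * s) :
    klTerm t (c * s) ≤ t * Real.log (w / c) := by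
  rcases ht.eq_or_lt with rfl | ht
  · simp
  · have hs : 0 < s := hs.lt_of_ne fun h => by simp [← h] at hts; linarith
    have hc : 0 < c := ht.trans_le htc
    refine mul_le_mul_of_nonneg_left (Real.log_le_log (by positivity) ?_) ht.le
    rw [div_le_div_iff₀ (by positivity) hc]
    nlinarith

lemma klTerm_add_le {t₁ t₂ s₁ s₂ : ℝ} (ht₁ : 0 ≤ t₁) (ht₂ : 0 ≤ t₂) (hs₁ : 0 ≤ s₁)
    (hs₂ : 0 ≤ s₂) (h₁ : s₁ = 0 → t₁ = 0) (h₂ : s₂ = 0 → t₂ = 0) :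
    klTerm (t₁ + t₂) (s₁ + s₂) ≤ klTerm t₁ s₁ + klTerm t₂ s₂ := by
  rcases hs₁.eq_or_lt with hs₁ | hs₁
  · simp [← hs₁, h₁ hs₁.symm]
  rcases hs₂.eq_or_lt with hs₂ | hs₂
  · simp [← hs₂, h₂ hs₂.symm]
  have hS : 0 < s₁ + s₂ := by positivity
  have hmid : s₁ / (s₁ + s₂) * (t₁ / s₁) + s₂ / (s₁ + s₂) * (t₂ / s₂)
      = (t₁ + t₂) / (s₁ + s₂) := by field_simp
  have hconv := Real.convexOn_mul_log.2 (Set.mem_Ici.2 (div_nonneg ht₁ hs₁.le))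
    (Set.mem_Ici.2 (div_nonneg ht₂ hs₂.le)) (div_nonneg hs₁.le hS.le)
    (div_nonneg hs₂.le hS.le) (by field_simp)
  simp only [smul_eq_mul, hmid] at hconv
  rw [klTerm_eq_mul_mul_log hS.ne', klTerm_eq_mul_mul_log hs₁.ne',
    klTerm_eq_mul_mul_log hs₂.ne']
  calc (s₁ + s₂) * ((t₁ + t₂) / (s₁ + s₂) * Real.log ((t₁ + t₂) / (s₁ + s₂)))
      ≤ (s₁ + s₂) * (s₁ / (s₁ + s₂) * (t₁ / s₁ * Real.log (t₁ / s₁))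
          + s₂ / (s₁ + s₂) * (t₂ / s₂ * Real.log (t₂ / s₂))) := by gcongr
    _ = _ := by field_simp

lemma mul_binEnt_div (t s : ℝ) : s * binEnt (t / s) = -(klTerm t s + klTerm (s - t) s) := by
  rcases eq_or_ne s 0 with rfl | hs
  · simp [klTerm]
  · rw [binEnt, klTerm, klTerm, show 1 - t / s = (s - t) / s by field_simp]
    field_simp
    ring

lemma mul_binEnt_div_nonneg {t s : ℝ} (ht : 0 ≤ t) (hts : t ≤ s) : 0 ≤ s * binEnt (t / s) := by
  have hs : 0 ≤ s := ht.trans hts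
  have hbin : binEnt (t / s) = Real.binEntropy (t / s) := by
    simp only [binEnt, Real.binEntropy, Real.log_inv]; ring
  rw [hbin]
  exact mul_nonneg hs (Real.binEntropy_nonneg (div_nonneg ht hs) (div_le_one_of_le₀ hts hs))

lemma klTerm_mul_add_klTerm_mul_le {α q a w : ℝ} (hα : 0 ≤ α) (hq : 0 ≤ q) (hαa : α ≤ a)
    (hαw : α ≤ w * q) (hwqα : w * q - α ≤ w - a) (hw : w ≤ 1) :
    klTerm α (a * q) + klTerm (q - α) ((1 - a) * q)
      ≤ α * Real.log (w / a) + (w * q - α) * Real.log (w / (w - a)) := by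
  have hrest : klTerm (q - α) ((1 - a) * q) ≤ klTerm (w * q - α) ((w - a) * q) := by
    have hzero : (w - a) * q = 0 → w * q - α = 0 := by
      intro h
      rcases mul_eq_zero.1 h with h | h
      · linarith
      · rw [h] at hαw ⊢; linarith
    calc klTerm (q - α) ((1 - a) * q)
        = klTerm ((w * q - α) + (1 - w) * q) ((w - a) * q + (1 - w) * q) := by congr 1 <;> ring
      _ ≤ klTerm (w * q - α) ((w - a) * q) + klTerm ((1 - w) * q) ((1 - w) * q) :=
        klTerm_add_le (by linarith) (by nlinarith) (by nlinarith) (by nlinarith) hzero id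
      _ = klTerm (w * q - α) ((w - a) * q) := by rw [klTerm_self, add_zero]
  have hfirst := klTerm_mul_le hα hαa hq hαw
  have hsecond := klTerm_mul_le (by linarith) hwqα hq (show w * q - α ≤ w * q by linarith)
  linarith

/-- `I(A;Y)` for a binary `A`, given `q y = P(Y = y)` and `α y = P(A = 1, Y = y)`. -/
noncomputable def indicatorMutualInfo {Y : Type*} [Fintype Y] (q α : Y → ℝ) : ℝ :=
  binEnt (∑ y, α y) - ∑ y, q y * binEnt (α y / q y)

theorem indicatorMutualInfo_le {Y : Type*} [Fintype Y] {q α : Y → ℝ} {w : ℝ}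
    (hq : ∀ y, 0 ≤ q y) (hq_sum : ∑ y, q y = 1) (hα : ∀ y, 0 ≤ α y)
    (hαw : ∀ y, α y ≤ w * q y) (hw : w ≤ 1) :
    indicatorMutualInfo q α ≤ w * binEnt ((∑ y, α y) / w) := by
  set a := ∑ y, α y
  have hαa : ∀ y, α y ≤ a := fun y => single_le_sum (fun y _ => hα y) (mem_univ y)
  have hαq : ∀ y, α y ≤ q y := fun y => (hαw y).trans (by nlinarith [hq y])
  have hqα : ∀ y, q y - α y ≤ 1 - a := fun y => by
    simpa [sum_sub_distrib, hq_sum] using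
      single_le_sum (fun y _ => sub_nonneg.2 (hαq y)) (mem_univ y)
  have hwqα : ∀ y, w * q y - α y ≤ w - a := fun y => by
    simpa [sum_sub_distrib, ← mul_sum, hq_sum] using
      single_le_sum (fun y _ => sub_nonneg.2 (hαw y)) (mem_univ y)
  have hlhs : indicatorMutualInfo q α
      = ∑ y, (klTerm (α y) (a * q y) + klTerm (q y - α y) ((1 - a) * q y)) := by
    have hy : ∀ y, klTerm (α y) (a * q y) + klTerm (q y - α y) ((1 - a) * q y)
        = -(q y * binEnt (α y / q y)) - (α y * Real.log a + (q y - α y) * Real.log (1 - a)) := by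
      intro y
      rw [klTerm_mul_left (hα y) (hαa y) (hαq y),
        klTerm_mul_left (by linarith [hαq y]) (hqα y) (by linarith [hα y]), mul_binEnt_div]
      ring
    rw [sum_congr rfl fun y _ => hy y, sum_sub_distrib, sum_neg_distrib, sum_add_distrib,
      ← sum_mul, ← sum_mul, sum_sub_distrib, hq_sum, indicatorMutualInfo, binEnt]
    ring
  have hrhs : w * binEnt (a / w)
      = ∑ y, (α y * Real.log (w / a) + (w * q y - α y) * Real.log (w / (w - a))) := by
    rw [sum_add_distrib, ← sum_mul, ← sum_mul, sum_sub_distrib, ← mul_sum, hq_sum, mul_one,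
      mul_binEnt_div, klTerm, klTerm, ← inv_div w a, ← inv_div w (w - a), Real.log_inv,
      Real.log_inv]
    ring
  rw [hlhs, hrhs]
  exact sum_le_sum fun y _ =>
    klTerm_mul_add_klTerm_mul_le (hα y) (hq y) (hαa y) (hαw y) (hwqα y) hw

lemma sum_filter_comp_eq_mul {Ξ S : Type*} [Fintype Ξ] [Fintype S] [DecidableEq S] (σ : Ξ → S)
    (P : S → Prop) [DecidablePred P] {f g : Ξ → ℝ} (c : ℝ)
    (h : ∀ s, ∑ x ∈ univ.filter (fun x => σ x = s), f x
      = c * ∑ x ∈ univ.filter (fun x => σ x = s), g x) :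
    ∑ x ∈ univ.filter (fun x => P (σ x)), f x = c * ∑ x ∈ univ.filter (fun x => P (σ x)), g x := by
  have hfib (f : Ξ → ℝ) : ∑ x ∈ univ.filter (fun x => P (σ x)), f x
      = ∑ s ∈ univ.filter P, ∑ x ∈ univ.filter (fun x => σ x = s), f x := by
    rw [sum_fiberwise_eq_sum_filter]; simp
  rw [hfib, hfib, mul_sum]
  exact sum_congr rfl fun s _ => h s

/-- Write A = A_L̄ · A_{L∩S} where A_L̄ = β(X) and A_{L∩S} = γ(X_S) is a
function of X_S = σ(X).  If Y is independent of X_S and the chain X_S → X → Y holds,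
then I(A;Y) ≤ H(A_L̄ | A_{L∩S}). -/
theorem stmt9 {Ξ S Y : Type} [Fintype Ξ] [Fintype S] [Fintype Y] [DecidableEq S]
    (p : Ξ → Y → ℝ) (σ : Ξ → S) (β : Ξ → Bool) (γ : S → Bool)
    (hp : ∀ x y, 0 ≤ p x y) (hsum : ∑ x, ∑ y, p x y = 1)
    (hpriv : ∀ (y : Y) (s : S),
      (∑ x ∈ univ.filter (fun x => σ x = s), p x y)
        = (∑ x, p x y) * (∑ x ∈ univ.filter (fun x => σ x = s), ∑ y', p x y')) :
    binEnt (∑ x ∈ univ.filter (fun x => (β x && γ (σ x)) = true), ∑ y, p x y)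
      - ∑ y, (∑ x, p x y) *
          binEnt ((∑ x ∈ univ.filter (fun x => (β x && γ (σ x)) = true), p x y)
            / (∑ x, p x y))
    ≤ ∑ b : Bool, (∑ x ∈ univ.filter (fun x => γ (σ x) = b), ∑ y, p x y) *
        binEnt ((∑ x ∈ univ.filter (fun x => γ (σ x) = b ∧ β x = true), ∑ y, p x y)
          / (∑ x ∈ univ.filter (fun x => γ (σ x) = b), ∑ y, p x y)) := by
  rw [Fintype.sum_bool]
  set A := univ.filter (fun x => (β x && γ (σ x)) = true)
  set C := univ.filter (fun x => γ (σ x) = true)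
  have hAC : univ.filter (fun x => γ (σ x) = true ∧ β x = true) = A := by
    simp only [A, Bool.and_eq_true, and_comm]
  have hA_sub : A ⊆ C := fun x hx => by simp_all [A, C]
  have hC : ∀ y, ∑ x ∈ C, p x y = (∑ x, p x y) * ∑ x ∈ C, ∑ y', p x y' :=
    fun y => sum_filter_comp_eq_mul σ (γ · = true) _ (hpriv y)
  have hle : ∀ y, ∑ x ∈ A, p x y ≤ (∑ x ∈ C, ∑ y', p x y') * ∑ x, p x y := fun y => by
    rw [mul_comm, ← hC]; exact sum_le_sum_of_subset_of_nonneg hA_sub fun x _ _ => hp x y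
  have hC_le : ∑ x ∈ C, ∑ y, p x y ≤ 1 := hsum ▸
    sum_le_sum_of_subset_of_nonneg (subset_univ C) fun x _ _ => sum_nonneg fun y _ => hp x y
  have hI := indicatorMutualInfo_le (fun y => sum_nonneg fun x _ => hp x y)
    (by rw [sum_comm, hsum]) (fun y => sum_nonneg fun x _ => hp x y) hle hC_le
  rw [indicatorMutualInfo, sum_comm] at hI
  rw [hAC]
  have hfalse : 0 ≤ (∑ x ∈ univ.filter (fun x => γ (σ x) = false), ∑ y, p x y) *
      binEnt ((∑ x ∈ univ.filter (fun x => γ (σ x) = false ∧ β x = true), ∑ y, p x y)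
        / (∑ x ∈ univ.filter (fun x => γ (σ x) = false), ∑ y, p x y)) :=
    mul_binEnt_div_nonneg (sum_nonneg fun x _ => sum_nonneg fun y _ => hp x y)
      (sum_le_sum_of_subset_of_nonneg (fun x hx => by simp_all)
        fun x _ _ => sum_nonneg fun y _ => hp x y)
  linarith
end

section
/- Combining Fano's inequality with the two mutual-information bounds: any mechanism Y satisfying perfect privacy with respect to X_S (and the Markov chain X_S → X → Y) has error probability P_e = P(Y ≠ A) satisfying h(P_e) ≥ H(A) − min{H(A_L̄ | A_{L∩S}), H(A | X_S)}. -/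
open Finset

/-!
Fano's inequality gives `H(A | Y) ≤ h(P_e)`. Because `Y` is independent of `X_S`, submodularity of
entropy gives `I(A ; Y) ≤ I(A ; Y | X_S) ≤ H(A | X_S)`, that is `H(A) - h(P_e) ≤ H(A | X_S)`.
Finally `A_{L∩S}` is a function of `X_S` and `A` is a function of `(A_L̄, A_{L∩S})`, so
`H(A | X_S) ≤ H(A | A_{L∩S}) ≤ H(A_L̄ | A_{L∩S})` and the minimum is `H(A | X_S)`.
Subadditivity and submodularity of entropy both reduce to Gibbs' inequality.
-/

open Real

lemma negMulLog_add_le {u v : ℝ} (hu : 0 ≤ u) (hv : 0 ≤ v) :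
    negMulLog (u + v) ≤ negMulLog u + negMulLog v := by
  have key : ∀ {u v : ℝ}, 0 ≤ u → 0 ≤ v → u * log u ≤ u * log (u + v) := by
    intro u v hu hv
    rcases hu.eq_or_lt with rfl | hu
    · simp
    · exact mul_le_mul_of_nonneg_left (log_le_log hu (by linarith)) hu.le
  have h1 := key hu hv
  have h2 := key hv hu
  rw [add_comm v] at h2
  simp only [negMulLog, neg_mul]
  linarith

lemma negMulLog_sum_le {ι : Type*} (s : Finset ι) {u : ι → ℝ} (hu : ∀ i ∈ s, 0 ≤ u i) :
    negMulLog (∑ i ∈ s, u i) ≤ ∑ i ∈ s, negMulLog (u i) := by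
  classical
  induction s using Finset.induction_on with
  | empty => simp
  | insert i s hi ih =>
    rw [sum_insert hi, sum_insert hi]
    have hs := fun j hj => hu j (mem_insert_of_mem hj)
    calc negMulLog (u i + ∑ j ∈ s, u j)
        ≤ negMulLog (u i) + negMulLog (∑ j ∈ s, u j) :=
          negMulLog_add_le (hu i (mem_insert_self i s)) (sum_nonneg hs)
      _ ≤ _ := by gcongr; exact ih hs

/-- Gibbs' inequality. -/
lemma sum_mul_log_le_sum_mul_log {ι : Type*} (s : Finset ι) {a b : ι → ℝ}
    (ha : ∀ i ∈ s, 0 ≤ a i) (hb : ∀ i ∈ s, 0 ≤ b i) (hab : ∀ i ∈ s, 0 < a i → 0 < b i)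
    (hsum : ∑ i ∈ s, b i ≤ ∑ i ∈ s, a i) :
    ∑ i ∈ s, a i * log (b i) ≤ ∑ i ∈ s, a i * log (a i) := by
  have term : ∀ i ∈ s, a i * log (b i) - a i * log (a i) ≤ b i - a i := by
    intro i hi
    rcases (ha i hi).eq_or_lt with h0 | hpos
    · rw [← h0]; simpa using hb i hi
    · have hbpos := hab i hi hpos
      have := log_le_sub_one_of_pos (div_pos hbpos hpos)
      rw [log_div hbpos.ne' hpos.ne'] at this
      have := mul_le_mul_of_nonneg_left this hpos.le
      have e : a i * (b i / a i - 1) = b i - a i := by field_simp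
      linarith
  have := sum_le_sum term
  rw [sum_sub_distrib, sum_sub_distrib] at this
  linarith

section Entropy

variable {Ω α β γ : Type*} [Fintype Ω] [DecidableEq α] [DecidableEq β] [DecidableEq γ]
  (p : Ω → ℝ)

/- `p` is a finite, possibly unnormalised, measure on `Ω` and `law p f` its pushforward along `f`;
`condEntropy p f g` is `H(f | g)`. -/

def law (f : Ω → α) (a : α) : ℝ := ∑ ω ∈ univ.filter (fun ω => f ω = a), p ω

noncomputable def entropy [Fintype α] (f : Ω → α) : ℝ := ∑ a, negMulLog (law p f a)

noncomputable def condEntropy [Fintype α] [Fintype β] (f : Ω → α) (g : Ω → β) : ℝ :=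
  entropy p (fun ω => (g ω, f ω)) - entropy p g

variable {p}

lemma law_nonneg (hp : ∀ ω, 0 ≤ p ω) (f : Ω → α) (a : α) : 0 ≤ law p f a :=
  sum_nonneg fun ω _ => hp ω

lemma sum_law [Fintype α] (f : Ω → α) : ∑ a, law p f a = ∑ ω, p ω :=
  sum_fiberwise univ f p

lemma law_le_sum [Fintype α] (hp : ∀ ω, 0 ≤ p ω) (f : Ω → α) (a : α) : law p f a ≤ ∑ ω, p ω := by
  rw [← sum_law f]
  exact single_le_sum (fun a _ => law_nonneg hp f a) (mem_univ a)

lemma law_comp [Fintype α] (f : Ω → α) (φ : α → β) (b : β) :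
    law p (fun ω => φ (f ω)) b = ∑ a ∈ univ.filter (fun a => φ a = b), law p f a := by
  rw [law, ← sum_fiberwise_of_maps_to (g := f) (t := univ.filter (fun a => φ a = b))
    (fun ω hω => by simpa using hω)]
  refine sum_congr rfl fun a ha => ?_
  rw [law, filter_filter]
  refine sum_congr (filter_congr fun ω _ => ?_) fun _ _ => rfl
  rw [mem_filter] at ha
  constructor
  · exact fun h => h.2
  · rintro rfl; exact ⟨ha.2, rfl⟩

lemma sum_law_prod_right [Fintype β] (f : Ω → α) (g : Ω → β) (a : α) :
    ∑ b, law p (fun ω => (f ω, g ω)) (a, b) = law p f a := by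
  rw [law, ← sum_fiberwise _ g p]
  refine sum_congr rfl fun b _ => ?_
  rw [law, filter_filter]
  simp only [Prod.mk.injEq]

lemma sum_law_prod_left [Fintype α] (f : Ω → α) (g : Ω → β) (b : β) :
    ∑ a, law p (fun ω => (f ω, g ω)) (a, b) = law p g b := by
  rw [law, ← sum_fiberwise _ f p]
  refine sum_congr rfl fun a _ => ?_
  rw [law, filter_filter]
  simp only [Prod.mk.injEq, and_comm]

lemma law_prod_le_left [Fintype β] (hp : ∀ ω, 0 ≤ p ω) (f : Ω → α) (g : Ω → β) (a : α) (b : β) :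
    law p (fun ω => (f ω, g ω)) (a, b) ≤ law p f a := by
  rw [← sum_law_prod_right f g a]
  exact single_le_sum (fun b _ => law_nonneg hp _ _) (mem_univ b)

lemma law_prod_le_right [Fintype α] (hp : ∀ ω, 0 ≤ p ω) (f : Ω → α) (g : Ω → β) (a : α) (b : β) :
    law p (fun ω => (f ω, g ω)) (a, b) ≤ law p g b := by
  rw [← sum_law_prod_left f g b]
  exact single_le_sum (f := fun a => law p (fun ω => (f ω, g ω)) (a, b))
    (fun a _ => law_nonneg hp _ _) (mem_univ a)

lemma entropy_eq_neg_sum_mul_log [Fintype α] (f : Ω → α) :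
    entropy p f = -∑ a, law p f a * log (law p f a) := by
  simp only [entropy, negMulLog, neg_mul, sum_neg_distrib]

lemma entropy_le_of_comp [Fintype α] [Fintype β] (hp : ∀ ω, 0 ≤ p ω) {f : Ω → α} {g : Ω → β}
    (φ : α → β) (hg : ∀ ω, g ω = φ (f ω)) : entropy p g ≤ entropy p f := by
  obtain rfl : g = fun ω => φ (f ω) := funext hg
  calc entropy p (fun ω => φ (f ω))
      = ∑ b, negMulLog (∑ a ∈ univ.filter (fun a => φ a = b), law p f a) := by
        simp only [entropy, law_comp]
    _ ≤ ∑ b, ∑ a ∈ univ.filter (fun a => φ a = b), negMulLog (law p f a) :=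
        sum_le_sum fun b _ => negMulLog_sum_le _ fun a _ => law_nonneg hp f a
    _ = entropy p f := sum_fiberwise univ φ _

/-- Subadditivity of entropy: Gibbs' inequality against the product of the marginals. The
correction `negMulLog (∑ ω, p ω)` vanishes for probability measures. -/
lemma entropy_prod_add_negMulLog_le [Fintype α] [Fintype β] (hp : ∀ ω, 0 ≤ p ω)
    (f : Ω → α) (g : Ω → β) :
    entropy p (fun ω => (f ω, g ω)) + negMulLog (∑ ω, p ω) ≤ entropy p f + entropy p g := by
  set L := law p (fun ω => (f ω, g ω))
  set M := ∑ ω, p ω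
  have hL0 : ∀ i, 0 ≤ L i := law_nonneg hp _
  have hLf : ∀ a b, L (a, b) ≤ law p f a := law_prod_le_left hp f g
  have hLg : ∀ a b, L (a, b) ≤ law p g b := law_prod_le_right hp f g
  have hfM : ∀ a, law p f a ≤ M := law_le_sum hp f
  have gibbs := sum_mul_log_le_sum_mul_log (univ : Finset (α × β)) (a := L)
    (b := fun i => law p f i.1 * law p g i.2 / M)
    (fun i _ => hL0 i)
    (fun i _ => div_nonneg (mul_nonneg (law_nonneg hp _ _) (law_nonneg hp _ _))
      ((law_nonneg hp f i.1).trans (hfM i.1)))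
    (fun i _ hi => by
      have h1 := hi.trans_le (hLf i.1 i.2)
      have h2 := hi.trans_le (hLg i.1 i.2)
      exact div_pos (mul_pos h1 h2) (h1.trans_le (hfM i.1)))
    (by
      rw [← sum_div, Fintype.sum_prod_type, ← sum_mul_sum, sum_law, sum_law, sum_law,
        mul_self_div_self])
  have expand : ∀ i, L i * log (law p f i.1 * law p g i.2 / M)
      = L i * log (law p f i.1) + L i * log (law p g i.2) - L i * log M := by
    rintro ⟨a, b⟩
    rcases (hL0 (a, b)).eq_or_lt with h0 | hpos
    · simp [← h0]
    · have h1 := hpos.trans_le (hLf a b)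
      have h2 := hpos.trans_le (hLg a b)
      rw [log_div (by positivity) (h1.trans_le (hfM a)).ne', log_mul h1.ne' h2.ne']
      ring
  have hf : ∑ i : α × β, L i * log (law p f i.1) = ∑ a, law p f a * log (law p f a) := by
    simp only [Fintype.sum_prod_type, ← sum_mul, L, sum_law_prod_right]
  have hg : ∑ i : α × β, L i * log (law p g i.2) = ∑ b, law p g b * log (law p g b) := by
    simp only [Fintype.sum_prod_type_right, ← sum_mul, L, sum_law_prod_left]
  have hM : ∑ i : α × β, L i * log M = M * log M := by
    rw [← sum_mul, sum_law]
  simp only [expand, sum_sub_distrib, sum_add_distrib, hf, hg, hM] at gibbs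
  simp only [entropy_eq_neg_sum_mul_log, negMulLog]
  linarith

lemma entropy_eq_of_comp [Fintype α] [Fintype β] (hp : ∀ ω, 0 ≤ p ω) {f : Ω → α} {g : Ω → β}
    (φ : α → β) (ψ : β → α) (hg : ∀ ω, g ω = φ (f ω)) (hf : ∀ ω, f ω = ψ (g ω)) :
    entropy p f = entropy p g :=
  le_antisymm (entropy_le_of_comp hp ψ hf) (entropy_le_of_comp hp φ hg)

lemma law_ite [Fintype α] (f : Ω → α) (g : Ω → β) (a : α) (b : β) :
    law (fun ω => if f ω = a then p ω else 0) g b = law p (fun ω => (f ω, g ω)) (a, b) := by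
  rw [law, ← sum_filter, law, filter_filter]
  simp only [Prod.mk.injEq, and_comm]

lemma entropy_prod_eq_sum_entropy_ite [Fintype α] [Fintype β] (f : Ω → α) (g : Ω → β) :
    entropy p (fun ω => (f ω, g ω))
      = ∑ a, entropy (fun ω => if f ω = a then p ω else 0) g := by
  simp only [entropy, Fintype.sum_prod_type, law_ite]

/-- Submodularity of entropy: `I(g ; h | f) ≥ 0`. -/
lemma entropy_prod_prod_add_entropy_le [Fintype α] [Fintype β] [Fintype γ]
    (hp : ∀ ω, 0 ≤ p ω) (f : Ω → α) (g : Ω → β) (h : Ω → γ) :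
    entropy p (fun ω => (f ω, g ω, h ω)) + entropy p f
      ≤ entropy p (fun ω => (f ω, g ω)) + entropy p (fun ω => (f ω, h ω)) := by
  have hmass : ∀ a, ∑ ω, (if f ω = a then p ω else 0) = law p f a :=
    fun a => (sum_filter _ _).symm
  rw [entropy_prod_eq_sum_entropy_ite f (fun ω => (g ω, h ω)), entropy_prod_eq_sum_entropy_ite,
    entropy_prod_eq_sum_entropy_ite, entropy, ← sum_add_distrib, ← sum_add_distrib]
  refine sum_le_sum fun a _ => ?_
  rw [← hmass]
  exact entropy_prod_add_negMulLog_le (fun ω => by split_ifs <;> simp [hp ω]) g h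

lemma entropy_prod_eq_add_of_indep [Fintype α] [Fintype β] (hp1 : ∑ ω, p ω = 1)
    {f : Ω → α} {g : Ω → β}
    (hind : ∀ a b, law p (fun ω => (f ω, g ω)) (a, b) = law p f a * law p g b) :
    entropy p (fun ω => (f ω, g ω)) = entropy p f + entropy p g := by
  simp only [entropy, Fintype.sum_prod_type, hind, negMulLog_mul, sum_add_distrib, ← sum_mul,
    ← mul_sum, sum_law, hp1, one_mul]

lemma condEntropy_le_condEntropy_comp [Fintype α] [Fintype β] [Fintype γ] (hp : ∀ ω, 0 ≤ p ω)
    (f : Ω → α) (g : Ω → β) (φ : β → γ) :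
    condEntropy p f g ≤ condEntropy p f (fun ω => φ (g ω)) := by
  have submod := entropy_prod_prod_add_entropy_le hp (fun ω => φ (g ω)) g f
  have h1 : entropy p (fun ω => (φ (g ω), g ω, f ω)) = entropy p (fun ω => (g ω, f ω)) :=
    entropy_eq_of_comp hp (fun x => x.2) (fun x => (φ x.1, x)) (fun _ => rfl) (fun _ => rfl)
  have h2 : entropy p (fun ω => (φ (g ω), g ω)) = entropy p g :=
    entropy_eq_of_comp hp (fun x => x.2) (fun b => (φ b, b)) (fun _ => rfl) (fun _ => rfl)
  unfold condEntropy
  linarith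

lemma condEntropy_le_of_comp [Fintype α] [Fintype β] [Fintype γ] (hp : ∀ ω, 0 ≤ p ω)
    {f : Ω → α} {f' : Ω → γ} (g : Ω → β) (ψ : β → γ → α) (hf : ∀ ω, f ω = ψ (g ω) (f' ω)) :
    condEntropy p f g ≤ condEntropy p f' g := by
  unfold condEntropy
  gcongr 1
  exact entropy_le_of_comp hp (fun x => (x.1, ψ x.1 x.2)) (fun ω => by rw [hf])

/-- `I(f ; g) ≤ I(f ; g | h) ≤ H(f | h)`, the first step because `g` and `h` are independent. -/
lemma entropy_le_condEntropy_add_condEntropy_of_indep [Fintype α] [Fintype β] [Fintype γ]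
    (hp : ∀ ω, 0 ≤ p ω) (hp1 : ∑ ω, p ω = 1) (f : Ω → α) {g : Ω → β} {h : Ω → γ}
    (hind : ∀ b c, law p (fun ω => (g ω, h ω)) (b, c) = law p g b * law p h c) :
    entropy p f ≤ condEntropy p f g + condEntropy p f h := by
  have submod := entropy_prod_prod_add_entropy_le hp f g h
  have mono : entropy p (fun ω => (g ω, h ω)) ≤ entropy p (fun ω => (f ω, g ω, h ω)) :=
    entropy_le_of_comp hp (fun x => x.2) (fun _ => rfl)
  have swap_g : entropy p (fun ω => (g ω, f ω)) = entropy p (fun ω => (f ω, g ω)) :=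
    entropy_eq_of_comp hp Prod.swap Prod.swap (fun _ => rfl) (fun _ => rfl)
  have swap_h : entropy p (fun ω => (h ω, f ω)) = entropy p (fun ω => (f ω, h ω)) :=
    entropy_eq_of_comp hp Prod.swap Prod.swap (fun _ => rfl) (fun _ => rfl)
  rw [entropy_prod_eq_add_of_indep hp1 hind] at mono
  unfold condEntropy
  linarith

lemma binEnt_eq_negMulLog_add (x : ℝ) : binEnt x = negMulLog x + negMulLog (1 - x) := by
  simp only [binEnt, negMulLog]; ring

lemma mul_binEnt_div_s10 {a m : ℝ} (ha : 0 ≤ a) (ham : a ≤ m) :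
    m * binEnt (a / m) = negMulLog a + negMulLog (m - a) - negMulLog m := by
  rcases (ha.trans ham).eq_or_lt with rfl | hm
  · obtain rfl : a = 0 := le_antisymm ham ha
    simp
  · have h1 : 1 - a / m = (m - a) / m := by field_simp
    have hdiv : ∀ u, 0 ≤ u → m * negMulLog (u / m) = negMulLog u + u * log m := by
      intro u hu
      rcases hu.eq_or_lt with rfl | hu
      · simp
      · simp only [negMulLog, log_div hu.ne' hm.ne']
        field_simp
        ring
    rw [binEnt_eq_negMulLog_add, h1, mul_add, hdiv a ha, hdiv (m - a) (by linarith)]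
    simp only [negMulLog]
    ring

lemma entropy_bool (hp1 : ∑ ω, p ω = 1) (f : Ω → Bool) :
    entropy p f = binEnt (law p f true) := by
  have hfalse : law p f false = 1 - law p f true := by
    rw [← hp1, ← sum_law f, Fintype.sum_bool]; ring
  rw [entropy, Fintype.sum_bool, binEnt_eq_negMulLog_add, hfalse, add_comm]

lemma condEntropy_bool [Fintype β] (hp : ∀ ω, 0 ≤ p ω) (f : Ω → Bool) (g : Ω → β) :
    condEntropy p f g
      = ∑ b, law p g b * binEnt (law p (fun ω => (g ω, f ω)) (b, true) / law p g b) := by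
  have hfalse : ∀ b, law p (fun ω => (g ω, f ω)) (b, false)
      = law p g b - law p (fun ω => (g ω, f ω)) (b, true) := fun b => by
    rw [← sum_law_prod_right g f b, Fintype.sum_bool]; ring
  rw [condEntropy, entropy, entropy, Fintype.sum_prod_type, ← sum_sub_distrib]
  refine sum_congr rfl fun b _ => ?_
  rw [Fintype.sum_bool, hfalse,
    mul_binEnt_div_s10 (law_nonneg hp _ (b, true)) (law_prod_le_left hp g f b true)]

/-- Fano's inequality for a binary `f` estimated by `g`, through the bijection
`(g, f) ↦ (f xor g, g)`. -/
lemma condEntropy_le_binEnt_law_xor (hp : ∀ ω, 0 ≤ p ω) (hp1 : ∑ ω, p ω = 1)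
    (f g : Ω → Bool) :
    condEntropy p f g ≤ binEnt (law p (fun ω => xor (f ω) (g ω)) true) := by
  have hbij : entropy p (fun ω => (g ω, f ω)) = entropy p (fun ω => (xor (f ω) (g ω), g ω)) :=
    entropy_eq_of_comp hp (fun x => (xor x.2 x.1, x.1)) (fun x => (x.2, xor x.1 x.2))
      (fun _ => rfl) (fun ω => by simp)
  have subadd := entropy_prod_add_negMulLog_le hp (fun ω => xor (f ω) (g ω)) g
  rw [hp1, negMulLog_one, add_zero, entropy_bool hp1] at subadd
  unfold condEntropy
  linarith

end Entropy

section Product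

/- A joint distribution `p x y` of `(X, Y)` is read as a measure on `Ξ × κ`. -/

variable {Ξ κ α β : Type*} [Fintype Ξ] [Fintype κ] [DecidableEq α] [DecidableEq β]

lemma law_comp_fst (p : Ξ → κ → ℝ) (f : Ξ → α) (a : α) :
    law (fun ω : Ξ × κ => p ω.1 ω.2) (fun ω => f ω.1) a
      = ∑ x ∈ univ.filter (fun x => f x = a), ∑ y, p x y := by
  rw [law, sum_filter, sum_filter, Fintype.sum_prod_type]
  refine sum_congr rfl fun x _ => ?_
  split_ifs <;> simp

lemma law_comp_fst_snd [DecidableEq κ] (p : Ξ → κ → ℝ) (f : Ξ → α) (a : α) (y : κ) :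
    law (fun ω : Ξ × κ => p ω.1 ω.2) (fun ω => (f ω.1, ω.2)) (a, y)
      = ∑ x ∈ univ.filter (fun x => f x = a), p x y := by
  rw [law, sum_filter, sum_filter, Fintype.sum_prod_type]
  refine sum_congr rfl fun x _ => ?_
  split_ifs <;> simp_all

lemma law_snd [DecidableEq κ] (p : Ξ → κ → ℝ) (y : κ) :
    law (fun ω : Ξ × κ => p ω.1 ω.2) (fun ω => ω.2) y = ∑ x, p x y := by
  rw [law, sum_filter, Fintype.sum_prod_type]
  simp

lemma law_xor_comp_fst (p : Ξ → Bool → ℝ) (f : Ξ → Bool) :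
    law (fun ω : Ξ × Bool => p ω.1 ω.2) (fun ω => xor (f ω.1) ω.2) true
      = ∑ x, ∑ y, if y ≠ f x then p x y else 0 := by
  rw [law, sum_filter, Fintype.sum_prod_type]
  refine sum_congr rfl fun x _ => sum_congr rfl fun y _ => ?_
  cases f x <;> cases y <;> rfl

lemma entropy_comp_fst_bool (p : Ξ → κ → ℝ) (hsum : ∑ x, ∑ y, p x y = 1) (f : Ξ → Bool) :
    entropy (fun ω : Ξ × κ => p ω.1 ω.2) (fun ω => f ω.1)
      = binEnt (∑ x ∈ univ.filter (fun x => f x = true), ∑ y, p x y) := by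
  rw [entropy_bool (by rwa [Fintype.sum_prod_type]), law_comp_fst]

lemma condEntropy_comp_fst_bool [Fintype β] (p : Ξ → κ → ℝ) (hp : ∀ x y, 0 ≤ p x y)
    (f : Ξ → Bool) (g : Ξ → β) :
    condEntropy (fun ω : Ξ × κ => p ω.1 ω.2) (fun ω => f ω.1) (fun ω => g ω.1)
      = ∑ b, (∑ x ∈ univ.filter (fun x => g x = b), ∑ y, p x y) *
          binEnt ((∑ x ∈ univ.filter (fun x => g x = b ∧ f x = true), ∑ y, p x y)
            / (∑ x ∈ univ.filter (fun x => g x = b), ∑ y, p x y)) := by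
  rw [condEntropy_bool fun ω : Ξ × κ => hp ω.1 ω.2]
  refine sum_congr rfl fun b _ => ?_
  rw [law_comp_fst p g, law_comp_fst p (fun x => (g x, f x))]
  simp only [Prod.mk.injEq]

end Product

/-- Combining Fano's inequality with the two mutual-information bounds:
for A = A_L̄ · A_{L∩S} (A_L̄ = β(X), A_{L∩S} = γ(X_S), X_S = σ(X)), any binary release Y
independent of X_S (with the Markov chain X_S → X → Y) has error P_e = P(Y ≠ A) with
h(P_e) ≥ H(A) − min{H(A_L̄ | A_{L∩S}), H(A | X_S)}. -/
theorem stmt10 {Ξ S : Type} [Fintype Ξ] [Fintype S] [DecidableEq S]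
    (p : Ξ → Bool → ℝ) (σ : Ξ → S) (β : Ξ → Bool) (γ : S → Bool)
    (hp : ∀ x y, 0 ≤ p x y) (hsum : ∑ x, ∑ y, p x y = 1)
    (hpriv : ∀ (y : Bool) (s : S),
      (∑ x ∈ univ.filter (fun x => σ x = s), p x y)
        = (∑ x, p x y) * (∑ x ∈ univ.filter (fun x => σ x = s), ∑ y', p x y')) :
    binEnt (∑ x, ∑ y, if y ≠ (β x && γ (σ x)) then p x y else 0)
      ≥ binEnt (∑ x ∈ univ.filter (fun x => (β x && γ (σ x)) = true), ∑ y, p x y)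
        - min
          (∑ b : Bool, (∑ x ∈ univ.filter (fun x => γ (σ x) = b), ∑ y, p x y) *
            binEnt ((∑ x ∈ univ.filter (fun x => γ (σ x) = b ∧ β x = true), ∑ y, p x y)
              / (∑ x ∈ univ.filter (fun x => γ (σ x) = b), ∑ y, p x y)))
          (∑ s, (∑ x ∈ univ.filter (fun x => σ x = s), ∑ y, p x y) *
            binEnt ((∑ x ∈ univ.filter (fun x => σ x = s ∧ (β x && γ (σ x)) = true), ∑ y, p x y)
              / (∑ x ∈ univ.filter (fun x => σ x = s), ∑ y, p x y))) := by
  have hP : ∀ ω : Ξ × Bool, 0 ≤ p ω.1 ω.2 := fun ω => hp ω.1 ω.2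
  have hP1 : ∑ ω : Ξ × Bool, p ω.1 ω.2 = 1 := by rwa [Fintype.sum_prod_type]
  have hind : ∀ s y, law (fun ω : Ξ × Bool => p ω.1 ω.2) (fun ω => (σ ω.1, ω.2)) (s, y)
      = law (fun ω : Ξ × Bool => p ω.1 ω.2) (fun ω => σ ω.1) s
        * law (fun ω : Ξ × Bool => p ω.1 ω.2) (fun ω => ω.2) y := by
    intro s y
    rw [law_comp_fst_snd, law_comp_fst, law_snd, hpriv, mul_comm]
  have coarsen := (condEntropy_le_condEntropy_comp hP (fun ω => β ω.1 && γ (σ ω.1))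
    (fun ω => σ ω.1) γ).trans (condEntropy_le_of_comp hP _ (fun c b => b && c) (fun _ => rfl))
  rw [← law_xor_comp_fst, ← entropy_comp_fst_bool p hsum,
    ← condEntropy_comp_fst_bool p hp β (fun x => γ (σ x)),
    ← condEntropy_comp_fst_bool p hp (fun x => β x && γ (σ x)) σ, min_eq_right coarsen]
  have fano := condEntropy_le_binEnt_law_xor hP hP1 (fun ω => β ω.1 && γ (σ ω.1)) (fun ω => ω.2)
  have privacy := entropy_le_condEntropy_add_condEntropy_of_indep hP hP1
    (fun ω => β ω.1 && γ (σ ω.1)) hind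
  linarith
end
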